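/- Let P be the tetrahedron in ℝ³ with vertices (−1,−1,−1), (1,0,0), (0,1,0), (0,0,1). Then L(P) = 1 and L(2P) = 2 (where 2P = P + P); in particular the ten segments determined by the five lattice points of P (the four vertices and the origin) lie in ten pairwise distinct classes of ℤ₃ℙ². -/

import Mathlib

open Pointwise

/-- The real point corresponding to a lattice point. -/
def coeV {n : ℕ} (v : Fin n → ℤ) : Fin n → ℝ := fun i => (v i : ℝ)

/-- A vector in `ℤ^n` is primitive if the gcd of its coordinates is `1`. -/
def IsPrim {n : ℕ} (v : Fin n → ℤ) : Prop := Finset.univ.gcd v = 1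

/-- The zonotope with base lattice point `A` obtained as the Minkowski sum of the
lattice segments `[0, v i]`. -/
def Zono {n L : ℕ} (A : Fin n → ℤ) (v : Fin L → Fin n → ℤ) : Set (Fin n → ℝ) :=
  ({coeV A} : Set (Fin n → ℝ)) + ∑ i, segment ℝ 0 (coeV (v i))

/-- `P` contains (a translate of) a Minkowski sum of `L` primitive lattice segments. -/
def IsDecomp {n : ℕ} (P : Set (Fin n → ℝ)) (L : ℕ) : Prop :=
  ∃ (A : Fin n → ℤ) (v : Fin L → Fin n → ℤ), (∀ i, IsPrim (v i)) ∧ Zono A v ⊆ P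

/-- `L` is the Minkowski length of `P`. -/
def MinkLen {n : ℕ} (P : Set (Fin n → ℝ)) (L : ℕ) : Prop :=
  IsDecomp P L ∧ ∀ M, IsDecomp P M → M ≤ L

/-- `P` is a lattice polytope: the convex hull of a nonempty finite set of lattice points. -/
def IsLatticePolytope {n : ℕ} (P : Set (Fin n → ℝ)) : Prop :=
  ∃ S : Finset (Fin n → ℤ), S.Nonempty ∧ P = convexHull ℝ (coeV '' ↑S)

/-- `Zono A v` is a smallest maximal Minkowski decomposition in `P`: it realizes the
Minkowski length of `P` and is minimal with respect to inclusion among all maximal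
decompositions in `P`. -/
def IsSmallestMax {n L : ℕ} (P : Set (Fin n → ℝ)) (A : Fin n → ℤ)
    (v : Fin L → Fin n → ℤ) : Prop :=
  (∀ i, IsPrim (v i)) ∧ Zono A v ⊆ P ∧ MinkLen P L ∧
    ∀ (B : Fin n → ℤ) (w : Fin L → Fin n → ℤ), (∀ i, IsPrim (w i)) →
      Zono B w ⊆ P → Zono B w ⊆ Zono A v → Zono B w = Zono A v

/-- Two direction vectors represent the same class in `ℤ₃ℙ²`:
they are congruent mod 3 up to sign. -/
def SameClass3 (d e : Fin 3 → ℤ) : Prop :=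
  (∀ i, (d i - e i) % 3 = 0) ∨ (∀ i, (d i + e i) % 3 = 0)

/-- The tetrahedron with vertices `(-1,-1,-1), (1,0,0), (0,1,0), (0,0,1)`. -/
def P19 : Set (Fin 3 → ℝ) :=
  convexHull ℝ {coeV ![-1, -1, -1], coeV ![1, 0, 0], coeV ![0, 1, 0], coeV ![0, 0, 1]}

/-! The four facets of `P19` have outer normals `u j` (`facetNormal19`) summing to zero, and
`P19 = {p | ∀ j, u j ⬝ p ≤ 1}`.
If a translate of `[0, v 1] + ⋯ + [0, v M]` lies in `k • P19`, then for each facet the vertex of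
the zonotope maximising `u j` gives `u j ⬝ A + ∑ i, max 0 (u j ⬝ v i) ≤ k`; summing over the facets,
the terms `u j ⬝ A` cancel. On the other hand every nonzero integer vector `v` has
`∑ j, max 0 (u j ⬝ v) ≥ 3`, because the four values `u j ⬝ v` are congruent modulo 4 and sum to zero.
Hence `3 M ≤ 4 k`, which gives `M ≤ 1` for `P19` and `M ≤ 2` for `P19 + P19`. -/

lemma coeV_zero {n : ℕ} : coeV (0 : Fin n → ℤ) = 0 := by
  funext i; simp [coeV]

lemma coeV_add {n : ℕ} (x y : Fin n → ℤ) : coeV (x + y) = coeV x + coeV y := by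
  funext i; simp [coeV]

lemma coeV_sum {n : ℕ} {ι : Type*} (s : Finset ι) (v : ι → Fin n → ℤ) :
    coeV (∑ i ∈ s, v i) = ∑ i ∈ s, coeV (v i) := by
  funext j; simp [coeV, Finset.sum_apply]

lemma coeV_dotProduct_coeV {n : ℕ} (u x : Fin n → ℤ) :
    coeV u ⬝ᵥ coeV x = ((u ⬝ᵥ x : ℤ) : ℝ) := by
  simp [coeV, dotProduct]

lemma IsPrim.ne_zero {n : ℕ} {v : Fin n → ℤ} (h : IsPrim v) : v ≠ 0 := by
  rintro rfl
  have hgcd : Finset.univ.gcd (0 : Fin n → ℤ) = 0 := Finset.gcd_eq_zero_iff.2 fun _ _ => rfl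
  rw [IsPrim, hgcd] at h
  exact zero_ne_one h

lemma zono_zero {n L : ℕ} (v : Fin L → Fin n → ℤ) :
    Zono 0 v = ∑ i, segment ℝ 0 (coeV (v i)) := by
  rw [Zono, coeV_zero, Set.singleton_zero, zero_add]

lemma coeV_add_sum_mem_zono {n L : ℕ} (A : Fin n → ℤ) (v : Fin L → Fin n → ℤ)
    (S : Finset (Fin L)) : coeV (A + ∑ i ∈ S, v i) ∈ Zono A v := by
  rw [coeV_add, coeV_sum, Zono, ← Finset.univ_inter S, ← Finset.sum_ite_mem]
  refine Set.add_mem_add rfl (Set.finsetSum_mem_finsetSum _ _ _ fun i _ => ?_)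
  split_ifs
  exacts [right_mem_segment _ _ _, left_mem_segment _ _ _]

/-- The vertex `A + ∑ {v i | 0 < u ⬝ v i}` of the zonotope maximises `u`. -/
lemma dotProduct_add_sum_max_le_of_zono_subset {n L : ℕ} {Q : Set (Fin n → ℝ)}
    {u : Fin n → ℤ} {b : ℤ} (hQ : ∀ x, coeV x ∈ Q → u ⬝ᵥ x ≤ b) {A : Fin n → ℤ}
    {v : Fin L → Fin n → ℤ} (hsub : Zono A v ⊆ Q) :
    u ⬝ᵥ A + ∑ i, max 0 (u ⬝ᵥ v i) ≤ b := by
  have hvertex := hQ _ (hsub (coeV_add_sum_mem_zono A v {i | 0 < u ⬝ᵥ v i}))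
  rw [dotProduct_add, dotProduct_sum, Finset.sum_filter] at hvertex
  convert hvertex using 2
  refine Finset.sum_congr rfl fun i _ => ?_
  split_ifs <;> omega

def facetNormal19 : Fin 4 → Fin 3 → ℤ :=
  ![![1, 1, 1], ![-3, 1, 1], ![1, -3, 1], ![1, 1, -3]]

lemma sum_apply_facetNormal19_dotProduct (f : ℤ → ℤ) (x : Fin 3 → ℤ) :
    ∑ j, f (facetNormal19 j ⬝ᵥ x) = f (x 0 + x 1 + x 2) + f (-3 * x 0 + x 1 + x 2) +
      f (x 0 - 3 * x 1 + x 2) + f (x 0 + x 1 - 3 * x 2) := by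
  simp [Fin.sum_univ_four, facetNormal19, dotProduct, Fin.sum_univ_three, sub_eq_add_neg]

lemma forall_facetNormal19_dotProduct_le_iff (x : Fin 3 → ℤ) (b : ℤ) :
    (∀ j, facetNormal19 j ⬝ᵥ x ≤ b) ↔ x 0 + x 1 + x 2 ≤ b ∧ -3 * x 0 + x 1 + x 2 ≤ b ∧
      x 0 - 3 * x 1 + x 2 ≤ b ∧ x 0 + x 1 - 3 * x 2 ≤ b := by
  simp [Fin.forall_fin_succ, facetNormal19, dotProduct, Fin.sum_univ_three, sub_eq_add_neg]

lemma sum_facetNormal19_dotProduct (x : Fin 3 → ℤ) : ∑ j, facetNormal19 j ⬝ᵥ x = 0 := by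
  refine (sum_apply_facetNormal19_dotProduct id x).trans ?_
  simp only [id]
  ring

lemma three_le_sum_max_facetNormal19_dotProduct {v : Fin 3 → ℤ} (hv : v ≠ 0) :
    3 ≤ ∑ j, max 0 (facetNormal19 j ⬝ᵥ v) := by
  have hv' : v 0 ≠ 0 ∨ v 1 ≠ 0 ∨ v 2 ≠ 0 := by
    contrapose! hv
    funext i; fin_cases i <;> simp [hv]
  rw [sum_apply_facetNormal19_dotProduct (max 0)]
  omega

lemma facetNormal19_dotProduct_le_of_mem {p : Fin 3 → ℝ} (hp : p ∈ P19) (j : Fin 4) :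
    coeV (facetNormal19 j) ⬝ᵥ p ≤ 1 := by
  have hlin : IsLinearMap ℝ (coeV (facetNormal19 j) ⬝ᵥ ·) :=
    ⟨dotProduct_add _, fun c x => dotProduct_smul c _ x⟩
  refine convexHull_min ?_ (convex_halfSpace_le hlin 1) hp
  intro q hq
  rcases hq with rfl | rfl | rfl | rfl <;> fin_cases j <;>
    simp [coeV, facetNormal19, dotProduct, Fin.sum_univ_three] <;> norm_num

lemma facetNormal19_dotProduct_le_one {x : Fin 3 → ℤ} (hx : coeV x ∈ P19) (j : Fin 4) :
    facetNormal19 j ⬝ᵥ x ≤ 1 := by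
  exact_mod_cast coeV_dotProduct_coeV _ x ▸ facetNormal19_dotProduct_le_of_mem hx j

lemma facetNormal19_dotProduct_le_two {x : Fin 3 → ℤ} (hx : coeV x ∈ P19 + P19) (j : Fin 4) :
    facetNormal19 j ⬝ᵥ x ≤ 2 := by
  obtain ⟨p, hp, q, hq, hpq⟩ := hx
  have hsum : ((facetNormal19 j ⬝ᵥ x : ℤ) : ℝ) =
      coeV (facetNormal19 j) ⬝ᵥ p + coeV (facetNormal19 j) ⬝ᵥ q := by
    rw [← coeV_dotProduct_coeV, ← hpq, dotProduct_add]
  have hp1 := facetNormal19_dotProduct_le_of_mem hp j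
  have hq1 := facetNormal19_dotProduct_le_of_mem hq j
  exact_mod_cast (show ((facetNormal19 j ⬝ᵥ x : ℤ) : ℝ) ≤ 2 by linarith)

lemma three_mul_le_of_isDecomp {Q : Set (Fin 3 → ℝ)} {b : ℤ}
    (hQ : ∀ x, coeV x ∈ Q → ∀ j, facetNormal19 j ⬝ᵥ x ≤ b) {M : ℕ} (hM : IsDecomp Q M) :
    3 * (M : ℤ) ≤ 4 * b := by
  obtain ⟨A, v, hprim, hsub⟩ := hM
  calc 3 * (M : ℤ) = ∑ _i : Fin M, 3 := by simp [mul_comm]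
    _ ≤ ∑ i, ∑ j, max 0 (facetNormal19 j ⬝ᵥ v i) := Finset.sum_le_sum fun i _ =>
        three_le_sum_max_facetNormal19_dotProduct (hprim i).ne_zero
    _ = ∑ j, (facetNormal19 j ⬝ᵥ A + ∑ i, max 0 (facetNormal19 j ⬝ᵥ v i)) := by
        rw [Finset.sum_add_distrib, sum_facetNormal19_dotProduct, zero_add, Finset.sum_comm]
    _ ≤ ∑ _j : Fin 4, b := Finset.sum_le_sum fun j _ =>
        dotProduct_add_sum_max_le_of_zono_subset (fun x hx => hQ x hx j) hsub
    _ = 4 * b := by simp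

lemma vertex_mem_P19 {p : Fin 3 → ℝ}
    (hp : p ∈ ({coeV ![-1, -1, -1], coeV ![1, 0, 0], coeV ![0, 1, 0], coeV ![0, 0, 1]} :
      Set (Fin 3 → ℝ))) : p ∈ P19 :=
  subset_convexHull ℝ _ hp

lemma zero_mem_P19 : (0 : Fin 3 → ℝ) ∈ P19 := by
  have hcentroid := (convex_convexHull ℝ _).sum_mem (t := Finset.univ)
    (w := fun _ => (1 / 4 : ℝ))
    (z := ![coeV ![-1, -1, -1], coeV ![1, 0, 0], coeV ![0, 1, 0], coeV ![0, 0, 1]])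
    (fun _ _ => by norm_num) (by norm_num)
    fun i _ => by fin_cases i <;> exact vertex_mem_P19 (by simp)
  unfold P19
  convert hcentroid using 1
  funext k
  fin_cases k <;> simp [Fin.sum_univ_four, coeV]

lemma segment_subset_P19 {p : Fin 3 → ℝ} (hp : p ∈ P19) : segment ℝ 0 p ⊆ P19 :=
  (convex_convexHull ℝ _).segment_subset zero_mem_P19 hp

lemma minkLen_P19 : MinkLen P19 1 := by
  refine ⟨⟨0, ![![1, 0, 0]], fun i => ?_, ?_⟩, fun M hM => ?_⟩
  · fin_cases i; unfold IsPrim; decide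
  · rw [zono_zero, Fin.sum_univ_one]
    exact segment_subset_P19 (vertex_mem_P19 (by simp))
  · have := three_mul_le_of_isDecomp (fun x hx => facetNormal19_dotProduct_le_one hx) hM
    omega

lemma minkLen_P19_add_P19 : MinkLen (P19 + P19) 2 := by
  refine ⟨⟨0, ![![1, 0, 0], ![0, 1, 0]], fun i => ?_, ?_⟩, fun M hM => ?_⟩
  · fin_cases i <;> (unfold IsPrim; decide)
  · rw [zono_zero, Fin.sum_univ_two]
    exact Set.add_subset_add (segment_subset_P19 (vertex_mem_P19 (by simp)))
      (segment_subset_P19 (vertex_mem_P19 (by simp)))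
  · have := three_mul_le_of_isDecomp (fun x hx => facetNormal19_dotProduct_le_two hx) hM
    omega

def latticePoints19 : Finset (Fin 3 → ℤ) :=
  {![-1, -1, -1], ![1, 0, 0], ![0, 1, 0], ![0, 0, 1], ![0, 0, 0]}

lemma coeV_mem_P19_iff (x : Fin 3 → ℤ) : coeV x ∈ P19 ↔ x ∈ latticePoints19 := by
  constructor
  · intro hx
    have h := (forall_facetNormal19_dotProduct_le_iff x 1).1 (facetNormal19_dotProduct_le_one hx)
    obtain ⟨a, b, c, rfl⟩ : ∃ a b c : ℤ, x = ![a, b, c] :=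
      ⟨x 0, x 1, x 2, by funext i; fin_cases i <;> rfl⟩
    have : a = -1 ∧ b = -1 ∧ c = -1 ∨ a = 1 ∧ b = 0 ∧ c = 0 ∨ a = 0 ∧ b = 1 ∧ c = 0 ∨
        a = 0 ∧ b = 0 ∧ c = 1 ∨ a = 0 ∧ b = 0 ∧ c = 0 := by
      simp only [Matrix.cons_val_zero, Matrix.cons_val_one, Matrix.cons_val_two, Matrix.tail_cons,
        Matrix.head_cons] at h
      omega
    rcases this with ⟨rfl, rfl, rfl⟩ | ⟨rfl, rfl, rfl⟩ | ⟨rfl, rfl, rfl⟩ | ⟨rfl, rfl, rfl⟩ |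
      ⟨rfl, rfl, rfl⟩ <;> decide
  · intro hx
    simp only [latticePoints19, Finset.mem_insert, Finset.mem_singleton] at hx
    rcases hx with rfl | rfl | rfl | rfl | rfl
    iterate 4 exact vertex_mem_P19 (by simp)
    convert zero_mem_P19
    funext i
    fin_cases i <;> simp [coeV]

instance : DecidableRel SameClass3 := fun _ _ => inferInstanceAs (Decidable (_ ∨ _))

lemma not_sameClass3_of_mem_latticePoints19 :
    ∀ x ∈ latticePoints19, ∀ y ∈ latticePoints19, ∀ z ∈ latticePoints19, ∀ w ∈ latticePoints19,
      x ≠ y → z ≠ w → ¬(x = z ∧ y = w ∨ x = w ∧ y = z) →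
        ¬ SameClass3 (fun i => y i - x i) (fun i => w i - z i) := by
  decide

/-- `L(P19) = 1` and `L(2·P19) = 2`; the lattice points of `P19` are its four vertices and
the origin, and the ten segments they determine lie in ten pairwise distinct classes of
`ℤ₃ℙ²`. -/
theorem stmt19 :
    MinkLen P19 1 ∧ MinkLen (P19 + P19) 2 ∧
    {x : Fin 3 → ℤ | coeV x ∈ P19} =
      {![-1, -1, -1], ![1, 0, 0], ![0, 1, 0], ![0, 0, 1], ![0, 0, 0]} ∧
    ∀ x y z w : Fin 3 → ℤ, coeV x ∈ P19 → coeV y ∈ P19 → coeV z ∈ P19 → coeV w ∈ P19 →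
      x ≠ y → z ≠ w → ({x, y} : Set (Fin 3 → ℤ)) ≠ {z, w} →
      ¬ SameClass3 (fun i => y i - x i) (fun i => w i - z i) := by
  refine ⟨minkLen_P19, minkLen_P19_add_P19, ?_, ?_⟩
  · ext x
    simp [coeV_mem_P19_iff, latticePoints19]
  · intro x y z w hx hy hz hw hxy hzw hne
    rw [coeV_mem_P19_iff] at hx hy hz hw
    exact not_sameClass3_of_mem_latticePoints19 x hx y hy z hz w hw hxy hzw
      (Set.pair_eq_pair_iff.not.mp hne)
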